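/- Let $\alpha \in (0,1)$, $T > 0$, $\delta \ge 1$, $C_0 > 0$, and consider the graded mesh. Let $u : [0,T] \to \mathbb{R}$ be continuous on $[0,T]$ and twice continuously differentiable on $(0,T]$ with $|u'(t)| \le C_0\, t^{\alpha-1}$ and $|u''(t)| \le C_0\, t^{\alpha-2}$ for all $t \in (0,T]$. Define $\psi^1 := \tau_1^{\alpha}\, \sup_{s \in (0,t_1)} \big( s^{1-\alpha}\, \big| \tfrac{u(t_1)-u(t_0)}{\tau_1} - u'(s) \big| \big)$ and $\psi^j := \tau_j^{2-\alpha}\, t_j^{\alpha}\, \sup_{s \in (t_{j-1}, t_j)} |u''(s)|$ for $2 \le j \le N$. Then there exists a constant $C > 0$, depending only on $C_0$, $\alpha$, $\delta$ and $T$, such that $\psi^j \le C\, N^{-\min\{\delta\alpha,\; 2-\alpha\}}$ for every $N \ge 1$ and every $1 \le j \le N$. -/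

import Mathlib

open Real Set

/-!
Comparing `u` with `C₀ s^α / α` shows that the difference quotient on the first step is
`O(t₁^(α-1))`, like `u'` itself, so `ψ¹ = O(t₁^α) = O(N^(-δα))`. For `j ≥ 2` the graded mesh
satisfies `τ_j ≤ δ t_j / j` (convexity of `x ↦ x^δ`) and `t_j ≤ 2^δ t_{j-1}`, so
`ψ^j = O(j^(α-2) t_j^α) = O(j^(δα-(2-α)) N^(-δα))`, and for `1 ≤ j ≤ N` this is
`O(N^(-min(δα, 2-α)))`.
-/

theorem sub_le_sub_of_hasDerivAt_le {f f' g g' : ℝ → ℝ} {a b : ℝ} (hab : a ≤ b)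
    (hf : ContinuousOn f (Icc a b)) (hg : ContinuousOn g (Icc a b))
    (hf' : ∀ x ∈ Ioo a b, HasDerivAt f (f' x) x) (hg' : ∀ x ∈ Ioo a b, HasDerivAt g (g' x) x)
    (bound : ∀ x ∈ Ioo a b, f' x ≤ g' x) :
    f b - f a ≤ g b - g a := by
  have hmono : MonotoneOn (fun x => g x - f x) (Icc a b) :=
    monotoneOn_of_hasDerivWithinAt_nonneg (convex_Icc a b) (hg.sub hf)
      (fun x hx => by
        rw [interior_Icc] at hx
        exact ((hg' x hx).sub (hf' x hx)).hasDerivWithinAt)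
      (fun x hx => by
        rw [interior_Icc] at hx
        exact sub_nonneg.2 (bound x hx))
  have := hmono (left_mem_Icc.2 hab) (right_mem_Icc.2 hab) hab
  simp only at this
  linarith

theorem abs_sub_le_sub_of_abs_hasDerivAt_le {f f' g g' : ℝ → ℝ} {a b : ℝ} (hab : a ≤ b)
    (hf : ContinuousOn f (Icc a b)) (hg : ContinuousOn g (Icc a b))
    (hf' : ∀ x ∈ Ioo a b, HasDerivAt f (f' x) x) (hg' : ∀ x ∈ Ioo a b, HasDerivAt g (g' x) x)
    (bound : ∀ x ∈ Ioo a b, |f' x| ≤ g' x) :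
    |f b - f a| ≤ g b - g a := by
  rw [abs_sub_le_iff]
  constructor
  · exact sub_le_sub_of_hasDerivAt_le hab hf hg hf' hg' fun x hx => (abs_le.1 (bound x hx)).2
  · have := sub_le_sub_of_hasDerivAt_le hab hf.neg hg (fun x hx => (hf' x hx).neg) hg'
      fun x hx => neg_le.1 (abs_le.1 (bound x hx)).1
    simp only [Pi.neg_apply] at this
    linarith

theorem abs_sub_le_of_abs_hasDerivAt_le_rpow {u u' : ℝ → ℝ} {α C b : ℝ} (hα : 0 < α)
    (hb : 0 ≤ b) (hu : ContinuousOn u (Icc 0 b)) (hu' : ∀ s ∈ Ioo 0 b, HasDerivAt u (u' s) s)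
    (hbound : ∀ s ∈ Ioo 0 b, |u' s| ≤ C * s ^ (α - 1)) :
    |u b - u 0| ≤ C / α * b ^ α := by
  have hg : ContinuousOn (fun s : ℝ => C / α * s ^ α) (Icc 0 b) :=
    (continuousOn_id.rpow_const fun _ _ => Or.inr hα.le).const_smul (C / α)
  have hg' : ∀ s ∈ Ioo 0 b, HasDerivAt (fun s : ℝ => C / α * s ^ α) (C * s ^ (α - 1)) s := by
    intro s hs
    have := (hasDerivAt_rpow_const (p := α) (Or.inl hs.1.ne')).const_mul (C / α)
    rwa [← mul_assoc, div_mul_cancel₀ _ hα.ne'] at this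
  simpa [zero_rpow hα.ne'] using abs_sub_le_sub_of_abs_hasDerivAt_le hb hu hg hu' hg' hbound

theorem rpow_mul_sSup_rpow_mul_abs_slope_sub_le {u u' : ℝ → ℝ} {α C b : ℝ} (hα₀ : 0 < α)
    (hα₁ : α ≤ 1) (hC : 0 ≤ C) (hb : 0 < b) (hu : ContinuousOn u (Icc 0 b))
    (hu' : ∀ s ∈ Ioo 0 b, HasDerivAt u (u' s) s)
    (hbound : ∀ s ∈ Ioo 0 b, |u' s| ≤ C * s ^ (α - 1)) :
    b ^ α * sSup ((fun s => s ^ (1 - α) * |(u b - u 0) / b - u' s|) '' Ioo 0 b) ≤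
      C * (α⁻¹ + 1) * b ^ α := by
  have hslope : b ^ (1 - α) * |(u b - u 0) / b| ≤ C / α := by
    have hbb : b ^ (1 - α) * b ^ α = b := by rw [← rpow_add hb, sub_add_cancel, rpow_one]
    calc b ^ (1 - α) * |(u b - u 0) / b| = b ^ (1 - α) * |u b - u 0| / b := by
          rw [abs_div, abs_of_pos hb, mul_div_assoc]
      _ ≤ b ^ (1 - α) * (C / α * b ^ α) / b := by
          gcongr; exact abs_sub_le_of_abs_hasDerivAt_le_rpow hα₀ hb.le hu hu' hbound
      _ = C / α := by rw [mul_left_comm, hbb, mul_div_assoc, div_self hb.ne', mul_one]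
  rw [mul_comm]
  refine mul_le_mul_of_nonneg_right (Real.sSup_le ?_ (by positivity)) (by positivity)
  rintro _ ⟨s, hs, rfl⟩
  have hss : s ^ (1 - α) * s ^ (α - 1) = 1 := by
    rw [← rpow_add hs.1, show 1 - α + (α - 1) = 0 by ring, rpow_zero]
  have hsb : s ^ (1 - α) ≤ b ^ (1 - α) := rpow_le_rpow hs.1.le hs.2.le (by linarith)
  calc s ^ (1 - α) * |(u b - u 0) / b - u' s|
      ≤ s ^ (1 - α) * |(u b - u 0) / b| + s ^ (1 - α) * |u' s| := by
        rw [← mul_add]; exact mul_le_mul_of_nonneg_left (abs_sub _ _) (rpow_nonneg hs.1.le _)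
    _ ≤ b ^ (1 - α) * |(u b - u 0) / b| + s ^ (1 - α) * (C * s ^ (α - 1)) := by
        gcongr
        · exact rpow_nonneg hs.1.le _
        · exact hbound s hs
    _ ≤ C / α + C := by rw [mul_left_comm, hss, mul_one]; linarith
    _ = C * (α⁻¹ + 1) := by ring

theorem rpow_mul_rpow_mul_sSup_abs_le {v : ℝ → ℝ} {α δ C a b τ j : ℝ} (hα : α ≤ 2) (hδ : 0 ≤ δ)
    (hC : 0 ≤ C) (hj : 0 < j) (ha : 0 < a) (hab : a ≤ b) (hba : b ≤ 2 ^ δ * a) (hτ : 0 ≤ τ)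
    (hτb : τ ≤ δ * b / j) (hv : ∀ s ∈ Ioo a b, |v s| ≤ C * s ^ (α - 2)) :
    τ ^ (2 - α) * b ^ α * sSup ((fun s => |v s|) '' Ioo a b) ≤
      C * (2 ^ δ * δ) ^ (2 - α) * j ^ (α - 2) * b ^ α := by
  have hb : 0 < b := ha.trans_le hab
  have hsup : sSup ((fun s => |v s|) '' Ioo a b) ≤ C * ((2 ^ δ) ^ (2 - α) * b ^ (α - 2)) := by
    refine Real.sSup_le ?_ (by positivity)
    rintro _ ⟨s, hs, rfl⟩
    have hbs : b / 2 ^ δ ≤ s := by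
      rw [div_le_iff₀ (by positivity), mul_comm]
      exact hba.trans (mul_le_mul_of_nonneg_left hs.1.le (by positivity))
    calc |v s| ≤ C * s ^ (α - 2) := hv s hs
      _ ≤ C * (b / 2 ^ δ) ^ (α - 2) :=
          mul_le_mul_of_nonneg_left (rpow_le_rpow_of_nonpos (by positivity) hbs (by linarith)) hC
      _ = C * ((2 ^ δ) ^ (2 - α) * b ^ (α - 2)) := by
          rw [div_eq_inv_mul, mul_rpow (by positivity) hb.le, inv_rpow (by positivity),
            ← rpow_neg (by positivity), neg_sub]
  have hτ' : τ ^ (2 - α) ≤ δ ^ (2 - α) * b ^ (2 - α) * j ^ (α - 2) := by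
    calc τ ^ (2 - α) ≤ (δ * b / j) ^ (2 - α) := rpow_le_rpow hτ hτb (by linarith)
      _ = δ ^ (2 - α) * b ^ (2 - α) * j ^ (α - 2) := by
          rw [div_eq_mul_inv, mul_rpow (by positivity) (by positivity),
            mul_rpow hδ hb.le, inv_rpow hj.le, ← rpow_neg hj.le, neg_sub]
  have hbb : b ^ (2 - α) * b ^ (α - 2) = 1 := by
    rw [← rpow_add hb, show 2 - α + (α - 2) = 0 by ring, rpow_zero]
  calc τ ^ (2 - α) * b ^ α * sSup ((fun s => |v s|) '' Ioo a b)
      ≤ δ ^ (2 - α) * b ^ (2 - α) * j ^ (α - 2) * b ^ α *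
          (C * ((2 ^ δ) ^ (2 - α) * b ^ (α - 2))) := by
        gcongr
        exact Real.sSup_nonneg (by rintro _ ⟨s, -, rfl⟩; exact abs_nonneg _)
    _ = C * ((2 ^ δ) ^ (2 - α) * δ ^ (2 - α)) * j ^ (α - 2) * b ^ α *
          (b ^ (2 - α) * b ^ (α - 2)) := by ring
    _ = C * (2 ^ δ * δ) ^ (2 - α) * j ^ (α - 2) * b ^ α := by
        rw [hbb, mul_one, mul_rpow (by positivity) hδ]

theorem rpow_sub_mul_rpow_neg_le_rpow_neg_min {x n a b : ℝ} (hx : 1 ≤ x) (hxn : x ≤ n) :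
    x ^ (a - b) * n ^ (-a) ≤ n ^ (-min a b) := by
  have hn : 0 < n := by linarith
  rcases le_total a b with h | h
  · rw [min_eq_left h]
    exact mul_le_of_le_one_left (rpow_nonneg hn.le _)
      (rpow_le_one_of_one_le_of_nonpos hx (by linarith))
  · calc x ^ (a - b) * n ^ (-a) ≤ n ^ (a - b) * n ^ (-a) :=
          mul_le_mul_of_nonneg_right (rpow_le_rpow (by linarith) hxn (by linarith))
            (rpow_nonneg hn.le _)
      _ = n ^ (-min a b) := by rw [← rpow_add hn, min_eq_right h]; ring_nf

noncomputable def gradedMesh (T δ : ℝ) (N m : ℕ) : ℝ := T * ((m : ℝ) / N) ^ δ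

section GradedMesh

variable {T δ : ℝ} {N : ℕ}

theorem gradedMesh_zero (hδ : δ ≠ 0) : gradedMesh T δ N 0 = 0 := by
  simp [gradedMesh, zero_rpow hδ]

theorem gradedMesh_pos (hT : 0 < T) (hN : 0 < N) {m : ℕ} (hm : 0 < m) :
    0 < gradedMesh T δ N m := by
  unfold gradedMesh; positivity

theorem gradedMesh_le (hT : 0 ≤ T) (hδ : 0 ≤ δ) {m : ℕ} (hmN : m ≤ N) :
    gradedMesh T δ N m ≤ T :=
  mul_le_of_le_one_right hT <| rpow_le_one (by positivity)
    (div_le_one_of_le₀ (by exact_mod_cast hmN) (by positivity)) hδ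

theorem gradedMesh_mono (hT : 0 ≤ T) (hδ : 0 ≤ δ) : Monotone (gradedMesh T δ N) := by
  intro m n hmn
  unfold gradedMesh
  gcongr

theorem gradedMesh_rpow (hT : 0 ≤ T) (α : ℝ) (m : ℕ) :
    gradedMesh T δ N m ^ α = T ^ α * (m : ℝ) ^ (δ * α) * (N : ℝ) ^ (-(δ * α)) := by
  unfold gradedMesh
  rw [mul_rpow hT (by positivity), ← rpow_mul (by positivity),
    div_rpow (by positivity) (by positivity), rpow_neg (by positivity), div_eq_mul_inv, mul_assoc]

theorem gradedMesh_sub_le (hT : 0 ≤ T) (hδ : 1 ≤ δ) (hN : 0 < N) {m : ℕ} (hm : 1 ≤ m) :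
    gradedMesh T δ N m - gradedMesh T δ N (m - 1) ≤ δ * gradedMesh T δ N m / m := by
  have hN' : (0 : ℝ) < N := by exact_mod_cast hN
  have hm' : (0 : ℝ) < m := by exact_mod_cast hm
  set x : ℝ := m / N
  set y : ℝ := ((m - 1 : ℕ) : ℝ) / N
  have hx : 0 < x := by positivity
  have hxy : x - y = (N : ℝ)⁻¹ := by
    simp only [x, y, Nat.cast_sub hm, Nat.cast_one]; field_simp; ring
  have hslope : slope (fun s => s ^ δ) y x ≤ δ * x ^ (δ - 1) :=
    (convexOn_rpow hδ).slope_le_of_hasDerivAt (by positivity : (0 : ℝ) ≤ y) hx.le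
      (by linarith [inv_pos.2 hN']) (hasDerivAt_rpow_const (Or.inl hx.ne'))
  rw [slope_def_field, div_le_iff₀ (by linarith [inv_pos.2 hN']), hxy,
    rpow_sub_one hx.ne'] at hslope
  calc gradedMesh T δ N m - gradedMesh T δ N (m - 1) = T * (x ^ δ - y ^ δ) := by
        simp only [gradedMesh, x, y]; ring
    _ ≤ T * (δ * (x ^ δ / x) * (N : ℝ)⁻¹) := by gcongr
    _ = δ * gradedMesh T δ N m / m := by
        simp only [gradedMesh, x]; field_simp

theorem gradedMesh_le_two_rpow_mul (hT : 0 ≤ T) (hδ : 0 ≤ δ) {m : ℕ} (hm : 2 ≤ m) :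
    gradedMesh T δ N m ≤ 2 ^ δ * gradedMesh T δ N (m - 1) := by
  have hm₂ : (2 : ℝ) ≤ m := by exact_mod_cast hm
  have hm' : (m : ℝ) ≤ 2 * ((m - 1 : ℕ) : ℝ) := by
    rw [Nat.cast_sub (by omega), Nat.cast_one]
    linarith
  calc gradedMesh T δ N m ≤ T * (2 * (((m - 1 : ℕ) : ℝ) / N)) ^ δ := by
        unfold gradedMesh; gcongr; rw [← mul_div_assoc]; gcongr
    _ = 2 ^ δ * gradedMesh T δ N (m - 1) := by
        rw [mul_rpow (by norm_num) (by positivity), gradedMesh]; ring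

theorem gradedMesh_psi_one_le {u u' : ℝ → ℝ} {α C : ℝ} (hα₀ : 0 < α) (hα₁ : α ≤ 1) (hC : 0 ≤ C)
    (hT : 0 < T) (hδ : 0 < δ) (hN : 0 < N) (hu : ContinuousOn u (Icc 0 T))
    (hu' : ∀ s ∈ Ioc 0 T, HasDerivAt u (u' s) s)
    (hbound : ∀ s ∈ Ioc 0 T, |u' s| ≤ C * s ^ (α - 1)) :
    (gradedMesh T δ N 1 - gradedMesh T δ N 0) ^ α *
        sSup ((fun s => s ^ (1 - α) * |(u (gradedMesh T δ N 1) - u (gradedMesh T δ N 0)) /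
          (gradedMesh T δ N 1 - gradedMesh T δ N 0) - u' s|) '' Ioo 0 (gradedMesh T δ N 1)) ≤
      C * T ^ α * (α⁻¹ + 1) * (N : ℝ) ^ (-(δ * α)) := by
  have h₁ : gradedMesh T δ N 1 ≤ T := gradedMesh_le hT.le hδ.le hN
  rw [gradedMesh_zero hδ.ne', sub_zero]
  calc _ ≤ C * (α⁻¹ + 1) * gradedMesh T δ N 1 ^ α :=
        rpow_mul_sSup_rpow_mul_abs_slope_sub_le hα₀ hα₁ hC (gradedMesh_pos hT hN one_pos)
          (hu.mono (Icc_subset_Icc le_rfl h₁)) (fun s hs => hu' s ⟨hs.1, hs.2.le.trans h₁⟩)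
          (fun s hs => hbound s ⟨hs.1, hs.2.le.trans h₁⟩)
    _ = C * T ^ α * (α⁻¹ + 1) * (N : ℝ) ^ (-(δ * α)) := by
        rw [gradedMesh_rpow hT.le, Nat.cast_one, one_rpow]; ring

theorem gradedMesh_psi_le {v : ℝ → ℝ} {α C : ℝ} (hα : α ≤ 2) (hC : 0 ≤ C) (hT : 0 < T)
    (hδ : 1 ≤ δ) (hv : ∀ s ∈ Ioc 0 T, |v s| ≤ C * s ^ (α - 2)) {j : ℕ} (hj : 2 ≤ j)
    (hjN : j ≤ N) :
    (gradedMesh T δ N j - gradedMesh T δ N (j - 1)) ^ (2 - α) * gradedMesh T δ N j ^ α *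
        sSup ((fun s => |v s|) '' Ioo (gradedMesh T δ N (j - 1)) (gradedMesh T δ N j)) ≤
      C * T ^ α * (2 ^ δ * δ) ^ (2 - α) * ((j : ℝ) ^ (δ * α - (2 - α)) * (N : ℝ) ^ (-(δ * α))) := by
  have hj' : (0 : ℝ) < j := by positivity
  have hpos : 0 < gradedMesh T δ N (j - 1) := gradedMesh_pos hT (by omega) (by omega)
  have hmono : gradedMesh T δ N (j - 1) ≤ gradedMesh T δ N j :=
    gradedMesh_mono hT.le (by linarith) (Nat.sub_le j 1)
  have hle : gradedMesh T δ N j ≤ T := gradedMesh_le hT.le (by linarith) hjN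
  calc _ ≤ C * (2 ^ δ * δ) ^ (2 - α) * (j : ℝ) ^ (α - 2) * gradedMesh T δ N j ^ α :=
        rpow_mul_rpow_mul_sSup_abs_le hα (by linarith) hC hj' hpos hmono
          (gradedMesh_le_two_rpow_mul hT.le (by linarith) hj) (sub_nonneg.2 hmono)
          (gradedMesh_sub_le hT.le hδ (by omega) (by omega))
          (fun s hs => hv s ⟨hpos.trans hs.1, hs.2.le.trans hle⟩)
    _ = _ := by
        rw [gradedMesh_rpow hT.le, show δ * α - (2 - α) = α - 2 + δ * α by ring,
          rpow_add hj']
        ring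

end GradedMesh

/-- On the graded mesh, if `u` is continuous on `[0,T]`, twice continuously
differentiable on `(0,T]` with `|u'(t)| ≤ C₀ t^(α-1)` and `|u''(t)| ≤ C₀ t^(α-2)`,
then the L1 local quantities `ψ j` satisfy `ψ j ≤ C * N^(-min(δα, 2-α))`. -/
theorem graded_mesh_psi_bound
    (α T δ C₀ : ℝ) (hα : α ∈ Set.Ioo (0 : ℝ) 1) (hT : 0 < T) (hδ : 1 ≤ δ)
    (hC₀ : 0 < C₀) :
    ∃ C : ℝ, 0 < C ∧
      ∀ (N : ℕ), 1 ≤ N →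
        ∀ (t τ : ℕ → ℝ), (∀ m, t m = T * ((m : ℝ) / (N : ℝ)) ^ δ) →
          (∀ m, 1 ≤ m → τ m = t m - t (m - 1)) →
          ∀ (u u' u'' : ℝ → ℝ),
            ContinuousOn u (Set.Icc 0 T) →
            (∀ s ∈ Set.Ioc (0 : ℝ) T, HasDerivAt u (u' s) s) →
            (∀ s ∈ Set.Ioc (0 : ℝ) T, HasDerivAt u' (u'' s) s) →
            ContinuousOn u'' (Set.Ioc 0 T) →
            (∀ s ∈ Set.Ioc (0 : ℝ) T, |u' s| ≤ C₀ * s ^ (α - 1)) →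
            (∀ s ∈ Set.Ioc (0 : ℝ) T, |u'' s| ≤ C₀ * s ^ (α - 2)) →
            ∀ (ψ : ℕ → ℝ),
              ψ 1 = τ 1 ^ α *
                sSup ((fun s => s ^ (1 - α) * |(u (t 1) - u (t 0)) / τ 1 - u' s|) ''
                  Set.Ioo 0 (t 1)) →
              (∀ j, 2 ≤ j → j ≤ N →
                ψ j = τ j ^ (2 - α) * t j ^ α *
                  sSup ((fun s => |u'' s|) '' Set.Ioo (t (j - 1)) (t j))) →
              ∀ j, 1 ≤ j → j ≤ N →
                ψ j ≤ C * (N : ℝ) ^ (-(min (δ * α) (2 - α))) := by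
  obtain ⟨hα₀, hα₁⟩ := hα
  refine ⟨C₀ * T ^ α * ((α⁻¹ + 1) + (2 ^ δ * δ) ^ (2 - α)), by positivity, ?_⟩
  intro N hN t τ ht hτ u u' u'' hu hu' _ _ hu'_le hu''_le ψ hψ₁ hψ j hj hjN
  obtain rfl : t = gradedMesh T δ N := funext ht
  have hψ_le : ψ j ≤ C₀ * T ^ α * ((α⁻¹ + 1) + (2 ^ δ * δ) ^ (2 - α)) *
      ((j : ℝ) ^ (δ * α - (2 - α)) * (N : ℝ) ^ (-(δ * α))) := by
    rcases hj.eq_or_lt with rfl | hj₂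
    · rw [hψ₁, hτ 1 le_rfl, Nat.cast_one, one_rpow, one_mul]
      refine (gradedMesh_psi_one_le hα₀ hα₁.le hC₀.le hT (by linarith) hN hu hu'
        hu'_le).trans ?_
      gcongr C₀ * T ^ α * ?_ * _
      exact le_add_of_nonneg_right (by positivity)
    · rw [hψ j hj₂ hjN, hτ j hj]
      refine (gradedMesh_psi_le (by linarith) hC₀.le hT hδ hu''_le hj₂ hjN).trans ?_
      gcongr C₀ * T ^ α * ?_ * _
      exact le_add_of_nonneg_left (by positivity)
  refine hψ_le.trans (mul_le_mul_of_nonneg_left ?_ (by positivity))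
  exact rpow_sub_mul_rpow_neg_le_rpow_neg_min (by exact_mod_cast hj) (by exact_mod_cast hjN)
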